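/- Let V be a real symmetric positive definite m×m matrix, Σ a real symmetric positive semidefinite m×m matrix, and Δ ∈ ℝ^{n×m} a matrix satisfying ‖Δ V^{1/2}‖_F ≤ β for some β ≥ 0, where V^{1/2} is the positive semidefinite square root of V. Then ‖Σ Δᵀ‖_F ≤ β · ‖V^{1/2}‖₂ · tr(V^{-1} Σ). -/

import Mathlib

open Matrix MeasureTheory ProbabilityTheory Filter

/-- Frobenius norm of a real matrix. -/
noncomputable def frob {α β : Type*} [Fintype α] [Fintype β] (A : Matrix α β ℝ) : ℝ :=
  Real.sqrt (∑ i, ∑ j, (A i j) ^ 2)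

/-- Spectral norm (largest singular value) of a real matrix. -/
noncomputable def spec {α β : Type*} [Fintype α] [Fintype β] [DecidableEq β]
    (A : Matrix α β ℝ) : ℝ :=
  ‖LinearMap.toContinuousLinearMap (Matrix.toEuclideanLin A)‖

/-- The positive semidefinite square root of a positive semidefinite real matrix
(junk value `0` if the matrix is not positive semidefinite). -/
noncomputable def msqrt {α : Type*} [Fintype α] [DecidableEq α]
    (M : Matrix α α ℝ) : Matrix α α ℝ :=
  open scoped Classical in
  if h : M.PosSemidef then
    h.1.eigenvectorUnitary.1 * diagonal ((RCLike.ofReal : ℝ → ℝ) ∘ Real.sqrt ∘ h.1.eigenvalues) *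
      (star h.1.eigenvectorUnitary : Matrix α α ℝ)
  else 0

/-- Euclidean norm of a real vector. -/
noncomputable def vnorm {α : Type*} [Fintype α] (v : α → ℝ) : ℝ :=
  Real.sqrt (∑ i, (v i) ^ 2)

/-! With `W = V^{1/2}` and `B = W⁻¹ Σ W⁻¹`, which is positive semidefinite with trace
`tr(V⁻¹ Σ)`, one has `Σ Δᵀ = W B (Δ W)ᵀ`, hence
`‖Σ Δᵀ‖_F ≤ ‖W‖₂ ‖B‖_F ‖Δ W‖_F ≤ ‖W‖₂ tr(B) β`.
The bound `‖B‖_F ≤ tr B` for `B ⪰ 0` comes from writing `B = Sᵀ S` with `S = B^{1/2}`: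
`‖Sᵀ S‖_F ≤ ‖S‖_F² = tr(Sᵀ S)`. -/

section SquareRoot

variable {α : Type*} [Fintype α] [DecidableEq α] {M : Matrix α α ℝ}

open scoped MatrixOrder

lemma msqrt_eq_sqrt (hM : M.PosSemidef) : msqrt M = CFC.sqrt M := by
  rw [CFC.sqrt_eq_cfc, cfc_nnreal_eq_real _ M hM.nonneg, hM.1.cfc_eq, msqrt, dif_pos hM,
    IsHermitian.cfc, Unitary.conjStarAlgAut_apply]
  congr 3
  ext i
  simp [Real.coe_sqrt, max_eq_left (hM.eigenvalues_nonneg i)]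

lemma Matrix.PosSemidef.posSemidef_msqrt (hM : M.PosSemidef) : (msqrt M).PosSemidef := by
  rw [msqrt_eq_sqrt hM]
  exact (CFC.sqrt_nonneg M).posSemidef

lemma Matrix.PosSemidef.msqrt_mul_msqrt (hM : M.PosSemidef) : msqrt M * msqrt M = M := by
  rw [msqrt_eq_sqrt hM]
  exact CFC.sqrt_mul_sqrt_self M hM.nonneg

lemma Matrix.PosSemidef.transpose_msqrt (hM : M.PosSemidef) : (msqrt M)ᵀ = msqrt M :=
  (isHermitian_iff_isSymm.mp hM.posSemidef_msqrt.1).eq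

end SquareRoot

section Norms

variable {α β γ : Type*} [Fintype α] [Fintype β] [Fintype γ]

open scoped Matrix.Norms.Frobenius in
lemma frob_eq_norm (A : Matrix α β ℝ) : frob A = ‖A‖ := by
  simp only [frob, frobenius_norm_def, Real.norm_eq_abs, Real.rpow_two, sq_abs, Real.sqrt_eq_rpow]

lemma frob_nonneg (A : Matrix α β ℝ) : 0 ≤ frob A :=
  Real.sqrt_nonneg _

lemma frob_transpose (A : Matrix α β ℝ) : frob Aᵀ = frob A := by
  simp only [frob_eq_norm, frobenius_norm_transpose]

lemma frob_mul_le_frob_mul_frob (A : Matrix α β ℝ) (B : Matrix β γ ℝ) :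
    frob (A * B) ≤ frob A * frob B := by
  simp only [frob_eq_norm]
  exact frobenius_norm_mul A B

lemma frob_sq (A : Matrix α β ℝ) : frob A ^ 2 = ∑ i, ∑ j, A i j ^ 2 :=
  Real.sq_sqrt (by positivity)

lemma frob_sq_eq_trace (A : Matrix α β ℝ) : frob A ^ 2 = (Aᵀ * A).trace := by
  rw [frob_sq, Finset.sum_comm]
  simp only [trace, diag, mul_apply, transpose_apply, sq]

lemma Matrix.PosSemidef.frob_le_trace [DecidableEq α] {B : Matrix α α ℝ} (hB : B.PosSemidef) :
    frob B ≤ B.trace := by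
  set S := msqrt B
  have hB_eq : B = Sᵀ * S := by rw [hB.transpose_msqrt, hB.msqrt_mul_msqrt]
  calc frob B = frob (Sᵀ * S) := by rw [← hB_eq]
    _ ≤ frob Sᵀ * frob S := frob_mul_le_frob_mul_frob _ _
    _ = B.trace := by rw [frob_transpose, ← sq, frob_sq_eq_trace, ← hB_eq]

lemma vnorm_nonneg (v : α → ℝ) : 0 ≤ vnorm v :=
  Real.sqrt_nonneg _

lemma frob_sq_eq_sum_vnorm_sq (A : Matrix α β ℝ) : frob A ^ 2 = ∑ j, vnorm (Aᵀ j) ^ 2 := by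
  rw [frob_sq, Finset.sum_comm]
  exact Finset.sum_congr rfl fun j _ ↦ (Real.sq_sqrt (by positivity)).symm

lemma spec_nonneg [DecidableEq β] (A : Matrix α β ℝ) : 0 ≤ spec A :=
  norm_nonneg _

lemma vnorm_mulVec_le [DecidableEq β] (A : Matrix α β ℝ) (x : β → ℝ) :
    vnorm (A *ᵥ x) ≤ spec A * vnorm x := by
  simpa [vnorm, spec, EuclideanSpace.norm_eq] using
    (LinearMap.toContinuousLinearMap (toEuclideanLin A)).le_opNorm (WithLp.toLp 2 x)

lemma frob_mul_le_spec_mul_frob [DecidableEq β] (A : Matrix α β ℝ) (B : Matrix β γ ℝ) :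
    frob (A * B) ≤ spec A * frob B := by
  rw [← sq_le_sq₀ (frob_nonneg _) (mul_nonneg (spec_nonneg A) (frob_nonneg B)), mul_pow,
    frob_sq_eq_sum_vnorm_sq, frob_sq_eq_sum_vnorm_sq, Finset.mul_sum]
  gcongr with j
  rw [← mul_pow]
  -- column `j` of `A * B` is `A *ᵥ Bᵀ j` definitionally
  exact pow_le_pow_left₀ (vnorm_nonneg _) (vnorm_mulVec_le A (Bᵀ j)) 2

end Norms

lemma mul_transpose_eq_mul_conj_mul_transpose {α γ R : Type*} [Fintype α] [DecidableEq α]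
    [CommRing R] {W : Matrix α α R} (hW : IsUnit W.det) (hW_symm : Wᵀ = W)
    (S : Matrix α α R) (D : Matrix γ α R) :
    S * Dᵀ = W * (W⁻¹ * S * W⁻¹) * (D * W)ᵀ := by
  rw [transpose_mul, hW_symm]
  simp only [Matrix.mul_assoc, nonsing_inv_mul_cancel_left _ _ hW,
    mul_nonsing_inv_cancel_left _ _ hW]

theorem weighted_cross_term_bound_general {n m : ℕ}
    (V Sig : Matrix (Fin m) (Fin m) ℝ) (Δ : Matrix (Fin n) (Fin m) ℝ) (β : ℝ)
    (hV : V.PosDef) (hSig : Sig.PosSemidef)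
    (hΔ : frob (Δ * msqrt V) ≤ β) :
    frob (Sig * Δᵀ) ≤ β * spec (msqrt V) * (V⁻¹ * Sig).trace := by
  set W := msqrt V
  have hWW : W * W = V := hV.posSemidef.msqrt_mul_msqrt
  have hW_unit : IsUnit W.det :=
    (isUnit_iff_isUnit_det W).mp (isUnit_of_mul_isUnit_left (hWW ▸ hV.isUnit))
  have hW_symm : Wᵀ = W := hV.posSemidef.transpose_msqrt
  set B := W⁻¹ * Sig * W⁻¹
  have hB : B.PosSemidef := by
    simpa [transpose_nonsing_inv, hW_symm] using hSig.mul_mul_conjTranspose_same W⁻¹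
  have hB_trace : B.trace = (V⁻¹ * Sig).trace := by
    rw [← hWW, Matrix.mul_inv_rev, trace_mul_comm, Matrix.mul_assoc]
  calc frob (Sig * Δᵀ) = frob (W * (B * (Δ * W)ᵀ)) := by
        rw [mul_transpose_eq_mul_conj_mul_transpose hW_unit hW_symm, Matrix.mul_assoc]
    _ ≤ spec W * (frob B * frob (Δ * W)) := by
        refine (frob_mul_le_spec_mul_frob _ _).trans (mul_le_mul_of_nonneg_left ?_ (spec_nonneg W))
        exact (frob_mul_le_frob_mul_frob _ _).trans_eq (by rw [frob_transpose])
    _ ≤ spec W * (B.trace * β) := by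
        refine mul_le_mul_of_nonneg_left ?_ (spec_nonneg W)
        exact mul_le_mul hB.frob_le_trace hΔ (frob_nonneg _) hB.trace_nonneg
    _ = β * spec W * (V⁻¹ * Sig).trace := by rw [hB_trace]; ring

theorem weighted_cross_term_bound {n m : ℕ}
    (V Sig : Matrix (Fin m) (Fin m) ℝ) (Δ : Matrix (Fin n) (Fin m) ℝ) (β : ℝ)
    (hβ : 0 ≤ β) (hV : V.PosDef) (hSig : Sig.PosSemidef)
    (hΔ : frob (Δ * msqrt V) ≤ β) :
    frob (Sig * Δᵀ) ≤ β * spec (msqrt V) * (V⁻¹ * Sig).trace :=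
  weighted_cross_term_bound_general V Sig Δ β hV hSig hΔ
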